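/- Let X∘ be a symmetric solution of CGDARE(Σ) and suppose that, for some 1 ≤ p < n, the closed-loop matrix has the block upper-triangular form A_{X∘} = [[N₀, C], [0, Z]] with N₀ ∈ ℝ^{p×p} and Z ∈ ℝ^{(n−p)×(n−p)}, and partition B = [B₁; B₂] conformably with B₂ ∈ ℝ^{(n−p)×m}. Let X_{t+1} = X_{t+1}ᵀ satisfy ker R_{X_{t+1}} ⊆ ker S_{X_{t+1}} and suppose X_{t+1} − X∘ = [[0, 0], [0, Ψ_{t+1}]] for some symmetric Ψ_{t+1} ∈ ℝ^{(n−p)×(n−p)}. Then X_t := ℛ(X_{t+1}) satisfies X_t − X∘ = [[0, 0], [0, Ψ_t]], where Ψ_t = Zᵀ Ψ_{t+1} Z − Zᵀ Ψ_{t+1} B₂ (R_{X∘} + B₂ᵀ Ψ_{t+1} B₂)† B₂ᵀ Ψ_{t+1} Z; i.e., the difference from X∘ evolves according to a reduced-order homogeneous generalised Riccati difference equation. -/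

import Mathlib

open Matrix

-- The Moore–Penrose pseudoinverse of a real matrix, characterised by the four
-- Penrose equations (it exists and is unique for every real matrix).
open Classical in
noncomputable def mpinv {α β : Type*} [Fintype α] [Fintype β]
    (M : Matrix α β ℝ) : Matrix β α ℝ :=
  if h : ∃ P : Matrix β α ℝ,
      M * P * M = M ∧ P * M * P = P ∧ (M * P)ᵀ = M * P ∧ (P * M)ᵀ = P * M
  then h.choose else 0

/-- `R_X = R + BᵀXB`. -/
noncomputable def RX {ι κ : Type*} [Fintype ι] [Fintype κ]
    (R : Matrix κ κ ℝ) (B : Matrix ι κ ℝ) (X : Matrix ι ι ℝ) : Matrix κ κ ℝ :=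
  R + Bᵀ * X * B

/-- `S_X = AᵀXB + S`. -/
noncomputable def SX {ι κ : Type*} [Fintype ι] [Fintype κ]
    (A : Matrix ι ι ℝ) (B S : Matrix ι κ ℝ) (X : Matrix ι ι ℝ) : Matrix ι κ ℝ :=
  Aᵀ * X * B + S

/-- `K_X = R_X† S_Xᵀ`. -/
noncomputable def KX {ι κ : Type*} [Fintype ι] [Fintype κ]
    (A : Matrix ι ι ℝ) (B S : Matrix ι κ ℝ) (R : Matrix κ κ ℝ) (X : Matrix ι ι ℝ) :
    Matrix κ ι ℝ :=
  mpinv (RX R B X) * (SX A B S X)ᵀ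

/-- The closed-loop matrix `A_X = A - B K_X`. -/
noncomputable def AX {ι κ : Type*} [Fintype ι] [Fintype κ]
    (A : Matrix ι ι ℝ) (B S : Matrix ι κ ℝ) (R : Matrix κ κ ℝ) (X : Matrix ι ι ℝ) :
    Matrix ι ι ℝ :=
  A - B * KX A B S R X

/-- The kernel condition `ker R_X ⊆ ker S_X`. -/
def KerCond {ι κ : Type*} [Fintype ι] [Fintype κ]
    (A : Matrix ι ι ℝ) (B S : Matrix ι κ ℝ) (R : Matrix κ κ ℝ) (X : Matrix ι ι ℝ) : Prop :=
  ∀ v : κ → ℝ, (RX R B X).mulVec v = 0 → (SX A B S X).mulVec v = 0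

/-- The Riccati operator `𝔇(X) = X - AᵀXA + S_X R_X† S_Xᵀ - Q`. -/
noncomputable def DOp {ι κ : Type*} [Fintype ι] [Fintype κ]
    (A Q : Matrix ι ι ℝ) (B S : Matrix ι κ ℝ) (R : Matrix κ κ ℝ) (X : Matrix ι ι ℝ) :
    Matrix ι ι ℝ :=
  X - Aᵀ * X * A + SX A B S X * mpinv (RX R B X) * (SX A B S X)ᵀ - Q

/-- The Riccati map `ℛ(X) = AᵀXA - S_X R_X† S_Xᵀ + Q`. -/
noncomputable def Ricc {ι κ : Type*} [Fintype ι] [Fintype κ]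
    (A Q : Matrix ι ι ℝ) (B S : Matrix ι κ ℝ) (R : Matrix κ κ ℝ) (X : Matrix ι ι ℝ) :
    Matrix ι ι ℝ :=
  Aᵀ * X * A - SX A B S X * mpinv (RX R B X) * (SX A B S X)ᵀ + Q

/-- `X` is a symmetric solution of CGDARE(Σ): it is symmetric, satisfies the GDARE and
the kernel condition `ker R_X ⊆ ker S_X`. -/
def IsCGDARESolution {ι κ : Type*} [Fintype ι] [Fintype κ]
    (A Q : Matrix ι ι ℝ) (B S : Matrix ι κ ℝ) (R : Matrix κ κ ℝ) (X : Matrix ι ι ℝ) : Prop :=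
  Xᵀ = X ∧ X = Ricc A Q B S R X ∧ KerCond A B S R X

/-- The matrix `N = [[A, 0, B], [Q, -I, S], [Sᵀ, 0, R]]` of the extended symplectic pencil. -/
noncomputable def Nmat {n m : ℕ} (A Q : Matrix (Fin n) (Fin n) ℝ)
    (B S : Matrix (Fin n) (Fin m) ℝ) (R : Matrix (Fin m) (Fin m) ℝ) :
    Matrix (Fin n ⊕ (Fin n ⊕ Fin m)) (Fin n ⊕ (Fin n ⊕ Fin m)) ℝ :=
  fromBlocks A (fromCols 0 B) (fromRows Q Sᵀ) (fromBlocks (-1) S 0 R)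

/-- The matrix `M = [[I, 0, 0], [0, -Aᵀ, 0], [0, -Bᵀ, 0]]` of the extended symplectic pencil. -/
noncomputable def Mmat {n m : ℕ} (A : Matrix (Fin n) (Fin n) ℝ)
    (B : Matrix (Fin n) (Fin m) ℝ) :
    Matrix (Fin n ⊕ (Fin n ⊕ Fin m)) (Fin n ⊕ (Fin n ⊕ Fin m)) ℝ :=
  fromBlocks 1 0 0 (fromBlocks (-Aᵀ) 0 (-Bᵀ) 0)

/-!
Write `X = X∘ + Δ` and `K = K_{X∘}`. The kernel condition for `X∘` gives `S_{X∘} = Kᵀ R_{X∘}`,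
hence `S_X = Kᵀ R_X + A_{X∘}ᵀ Δ B`, and the kernel condition for `X` lets `R_X†` act as an
inverse of `R_X` on `A_{X∘}ᵀ Δ B`. Expanding `ℛ(X) - ℛ(X∘)` with `A = A_{X∘} + B K`, every term
containing `K` cancels and what is left is the homogeneous Riccati expression
`A_{X∘}ᵀ Δ A_{X∘} - A_{X∘}ᵀ Δ B R_X† Bᵀ Δ A_{X∘}`. When `Δ` lives in the lower right block and
`A_{X∘}` is block upper triangular, only the lower right block `Zᵀ Ψ Z - Zᵀ Ψ B₂ R_X† B₂ᵀ Ψ Z`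
survives, and `R_X = R_{X∘} + B₂ᵀ Ψ B₂`.

The Penrose equations for `mpinv` of a symmetric matrix come from the spectral witness
`cfc (·⁻¹)`, which inverts the matrix on its range and vanishes on its kernel.
-/

def IsPenroseInverse {α β : Type*} [Fintype α] [Fintype β] (M : Matrix α β ℝ)
    (P : Matrix β α ℝ) : Prop :=
  M * P * M = M ∧ P * M * P = P ∧ (M * P)ᵀ = M * P ∧ (P * M)ᵀ = P * M

namespace IsPenroseInverse

variable {α β : Type*} [Fintype α] [Fintype β] {M : Matrix α β ℝ} {P P' : Matrix β α ℝ}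

theorem unique (hP : IsPenroseInverse M P) (hP' : IsPenroseInverse M P') : P = P' := by
  obtain ⟨h1, h2, h3, h4⟩ := hP
  obtain ⟨g1, g2, g3, g4⟩ := hP'
  have hMP : M * P = M * P' :=
    calc M * P = M * P' * M * P := by rw [g1]
      _ = (M * P')ᵀ * (M * P)ᵀ := by rw [g3, h3, Matrix.mul_assoc]
      _ = (M * P * M * P')ᵀ := by simp only [transpose_mul, Matrix.mul_assoc]
      _ = M * P' := by rw [h1, g3]
  have hPM : P * M = P' * M :=
    calc P * M = P * (M * P' * M) := by rw [g1]
      _ = (P * M)ᵀ * (P' * M)ᵀ := by rw [h4, g4]; simp only [Matrix.mul_assoc]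
      _ = (P' * (M * P * M))ᵀ := by simp only [transpose_mul, Matrix.mul_assoc]
      _ = P' * M := by rw [h1, g4]
  calc P = P * M * P := h2.symm
    _ = P' * (M * P') := by rw [hPM, Matrix.mul_assoc, hMP]
    _ = P' := by rw [← Matrix.mul_assoc, g2]

end IsPenroseInverse

theorem isPenroseInverse_mpinv {α β : Type*} [Fintype α] [Fintype β] {M : Matrix α β ℝ}
    (h : ∃ P, IsPenroseInverse M P) : IsPenroseInverse M (mpinv M) := by
  unfold mpinv
  split_ifs with h'
  · exact h'.choose_spec
  · exact absurd h h'

section Symmetric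

variable {κ : Type*} [Fintype κ] {M : Matrix κ κ ℝ}

theorem exists_isPenroseInverse_of_transpose_eq (hM : Mᵀ = M) :
    ∃ P, IsPenroseInverse M P ∧ Pᵀ = P := by
  classical
  have hsa : IsSelfAdjoint M := by
    rwa [IsSelfAdjoint, star_eq_conjTranspose, conjTranspose_eq_transpose_of_trivial]
  have hmul (f g : ℝ → ℝ) : cfc f M * cfc g M = cfc (fun x => f x * g x) M :=
    (cfc_mul f g M (M.finite_real_spectrum.continuousOn f)
      (M.finite_real_spectrum.continuousOn g)).symm
  have hsymm (f : ℝ → ℝ) : (cfc f M)ᵀ = cfc f M := by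
    simpa only [IsSelfAdjoint, star_eq_conjTranspose, conjTranspose_eq_transpose_of_trivial]
      using cfc_predicate f M
  have hid : cfc (fun x : ℝ => x) M = M := cfc_id' ℝ M
  have hMP : M * cfc (fun x : ℝ => x⁻¹) M = cfc (fun x : ℝ => x * x⁻¹) M := by
    nth_rw 1 [← hid]; rw [hmul]
  have hPM : cfc (fun x : ℝ => x⁻¹) M * M = cfc (fun x : ℝ => x⁻¹ * x) M := by
    nth_rw 2 [← hid]; rw [hmul]
  refine ⟨cfc (fun x : ℝ => x⁻¹) M, ⟨?_, ?_, hMP ▸ hsymm _, hPM ▸ hsymm _⟩, hsymm _⟩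
  · nth_rw 3 [← hid]
    rw [hMP, hmul]
    simp_rw [mul_inv_mul_cancel, hid]
  · rw [hPM, hmul]
    congr 1; funext x; simpa using mul_inv_mul_cancel x⁻¹

theorem isPenroseInverse_mpinv_of_transpose_eq (hM : Mᵀ = M) :
    IsPenroseInverse M (mpinv M) ∧ (mpinv M)ᵀ = mpinv M := by
  obtain ⟨P, hP, hPt⟩ := exists_isPenroseInverse_of_transpose_eq hM
  rw [(isPenroseInverse_mpinv ⟨P, hP⟩).unique hP]
  exact ⟨hP, hPt⟩

end Symmetric

theorem mul_mul_eq_of_ker_le {ι κ : Type*} [Fintype κ] {M : Matrix κ κ ℝ}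
    {N : Matrix ι κ ℝ} {P : Matrix κ κ ℝ} (hker : ∀ v, M *ᵥ v = 0 → N *ᵥ v = 0)
    (hP : M * P * M = M) : N * P * M = N := by
  classical
  have hM : M * (1 - P * M) = 0 := by
    rw [Matrix.mul_sub, Matrix.mul_one, ← Matrix.mul_assoc, hP, sub_self]
  have hN : N * (1 - P * M) = 0 := ext_iff_mulVec.2 fun v => by
    rw [← mulVec_mulVec, hker _ (by rw [mulVec_mulVec, hM, zero_mulVec]), zero_mulVec]
  rw [Matrix.mul_sub, Matrix.mul_one, sub_eq_zero] at hN
  rw [Matrix.mul_assoc, ← hN]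

theorem add_mul_mul_add_of_mul_mul_eq {ι κ : Type*} [Fintype κ] {G P : Matrix κ κ ℝ}
    {L W : Matrix ι κ ℝ} {K V : Matrix κ ι ℝ}
    (hG : G * P * G = G) (hW : W * P * G = W) (hV : G * P * V = V) :
    (L * G + W) * P * (G * K + V) = L * G * K + L * V + W * K + W * P * V := by
  have hG' : G * (P * (G * K)) = G * K := by simp only [← Matrix.mul_assoc, hG]
  have hV' : G * (P * V) = V := by rw [← Matrix.mul_assoc, hV]
  have hW' : W * (P * (G * K)) = W * K := by simp only [← Matrix.mul_assoc, hW]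
  simp only [Matrix.add_mul, Matrix.mul_add, Matrix.mul_assoc, hG', hV', hW']
  abel

-- With `F = A_{X∘}`, `G = R_{X∘}`, `G' = R_X` and `D = X - X∘`, the left side is
-- `ℛ(X) - ℛ(X∘)` once `S_{X∘} = Kᵀ G` and `S_X = Kᵀ G' + Fᵀ D B` are substituted.
theorem closedLoop_quadratic_identity {ι κ : Type*} [Fintype ι] [Fintype κ]
    {A F D : Matrix ι ι ℝ} {B : Matrix ι κ ℝ} {K : Matrix κ ι ℝ} {G G' P P' : Matrix κ κ ℝ}
    (hA : A = F + B * K) (hG' : G' = G + Bᵀ * D * B) (hD : Dᵀ = D) (hG : Gᵀ = G)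
    (hP' : P'ᵀ = P') (hGP : G * P * G = G) (hG'P' : G' * P' * G' = G')
    (hS : (Kᵀ * G' + Fᵀ * D * B) * P' * G' = Kᵀ * G' + Fᵀ * D * B) :
    Aᵀ * D * A - (Kᵀ * G' + Fᵀ * D * B) * P' * (Kᵀ * G' + Fᵀ * D * B)ᵀ + Kᵀ * G * P * (Kᵀ * G)ᵀ
      = Fᵀ * D * F - Fᵀ * D * B * P' * Bᵀ * D * F := by
  have hG't : G'ᵀ = G' := by
    rw [hG', transpose_add, hG, transpose_mul, transpose_mul, transpose_transpose, hD,
      Matrix.mul_assoc]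
  have hW : Fᵀ * D * B * P' * G' = Fᵀ * D * B := by
    rw [Matrix.add_mul, Matrix.add_mul, Matrix.mul_assoc (Kᵀ * G'), Matrix.mul_assoc Kᵀ,
      ← Matrix.mul_assoc G', hG'P'] at hS
    exact add_left_cancel hS
  have hWt : G' * P' * (Bᵀ * D * F) = Bᵀ * D * F := by
    simpa only [transpose_mul, transpose_transpose, hD, hP', hG't, Matrix.mul_assoc]
      using congrArg transpose hW
  have hSt : (Kᵀ * G' + Fᵀ * D * B)ᵀ = G' * K + Bᵀ * D * F := by
    simp only [transpose_add, transpose_mul, transpose_transpose, hG't, hD, Matrix.mul_assoc]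
  have hKGP : Kᵀ * G * P * (Kᵀ * G)ᵀ = Kᵀ * G * K := by
    rw [transpose_mul, transpose_transpose, hG, ← Matrix.mul_assoc, Matrix.mul_assoc Kᵀ G P,
      Matrix.mul_assoc Kᵀ, hGP]
  rw [hSt, add_mul_mul_add_of_mul_mul_eq hG'P' hW hWt, hKGP, hG', hA]
  simp only [transpose_add, transpose_mul, Matrix.add_mul, Matrix.mul_add, Matrix.mul_assoc]
  abel

section Riccati

variable {ι κ : Type*} [Fintype ι] [Fintype κ] {A Q : Matrix ι ι ℝ} {B S : Matrix ι κ ℝ}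
  {R : Matrix κ κ ℝ}

theorem RX_transpose {X : Matrix ι ι ℝ} (hR : Rᵀ = R) (hX : Xᵀ = X) :
    (RX R B X)ᵀ = RX R B X := by
  simp only [RX, transpose_add, transpose_mul, transpose_transpose, hR, hX, Matrix.mul_assoc]

theorem RX_eq_RX_add {X Y : Matrix ι ι ℝ} : RX R B X = RX R B Y + Bᵀ * (X - Y) * B := by
  simp only [RX, Matrix.mul_sub, Matrix.sub_mul]
  abel

theorem SX_eq_SX_add {X Y : Matrix ι ι ℝ} : SX A B S X = SX A B S Y + Aᵀ * (X - Y) * B := by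
  simp only [SX, Matrix.mul_sub, Matrix.sub_mul]
  abel

theorem transpose_KX_mul_RX {Xo : Matrix ι ι ℝ} (hR : Rᵀ = R) (hXo : Xoᵀ = Xo)
    (hker : KerCond A B S R Xo) : (KX A B S R Xo)ᵀ * RX R B Xo = SX A B S Xo := by
  obtain ⟨⟨hRo, -⟩, hPo⟩ := isPenroseInverse_mpinv_of_transpose_eq (RX_transpose (B := B) hR hXo)
  rw [KX, transpose_mul, transpose_transpose, hPo, mul_mul_eq_of_ker_le hker hRo]

theorem SX_eq_transpose_KX_mul_RX_add {Xo : Matrix ι ι ℝ} (hR : Rᵀ = R) (hXo : Xoᵀ = Xo)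
    (hker : KerCond A B S R Xo) (X : Matrix ι ι ℝ) :
    SX A B S X = (KX A B S R Xo)ᵀ * RX R B X + (AX A B S R Xo)ᵀ * (X - Xo) * B := by
  rw [SX_eq_SX_add (Y := Xo), RX_eq_RX_add (Y := Xo), ← transpose_KX_mul_RX hR hXo hker, AX]
  simp only [transpose_sub, transpose_mul, Matrix.mul_add, Matrix.sub_mul, Matrix.mul_assoc]
  abel

theorem Ricc_sub_Ricc (X Y : Matrix ι ι ℝ) :
    Ricc A Q B S R X - Ricc A Q B S R Y = Aᵀ * (X - Y) * A
      - SX A B S X * mpinv (RX R B X) * (SX A B S X)ᵀ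
      + SX A B S Y * mpinv (RX R B Y) * (SX A B S Y)ᵀ := by
  simp only [Ricc, Matrix.mul_sub, Matrix.sub_mul]
  abel

theorem Ricc_sub_eq_of_isCGDARESolution {Xo X : Matrix ι ι ℝ} (hR : Rᵀ = R)
    (hXo : IsCGDARESolution A Q B S R Xo) (hX : Xᵀ = X) (hXker : KerCond A B S R X) :
    Ricc A Q B S R X - Xo =
      (AX A B S R Xo)ᵀ * (X - Xo) * AX A B S R Xo -
        (AX A B S R Xo)ᵀ * (X - Xo) * B * mpinv (RX R B X) * Bᵀ * (X - Xo) * AX A B S R Xo := by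
  obtain ⟨hXot, hXoeq, hXoker⟩ := hXo
  have hRot := RX_transpose (B := B) hR hXot
  obtain ⟨⟨hRoPo, -⟩, -⟩ := isPenroseInverse_mpinv_of_transpose_eq hRot
  obtain ⟨⟨hR1P1, -⟩, hP1⟩ := isPenroseInverse_mpinv_of_transpose_eq (RX_transpose (B := B) hR hX)
  have hS1 := SX_eq_transpose_KX_mul_RX_add hR hXot hXoker X
  have hS1P1 := mul_mul_eq_of_ker_le hXker hR1P1
  rw [hS1] at hS1P1
  conv_lhs => rw [hXoeq]
  rw [Ricc_sub_Ricc, ← transpose_KX_mul_RX hR hXot hXoker, hS1]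
  exact closedLoop_quadratic_identity (sub_add_cancel _ _).symm RX_eq_RX_add
    (by rw [transpose_sub, hX, hXot]) hRot hP1 hRoPo hR1P1 hS1P1

end Riccati

section Blocks

variable {ι₁ ι₂ κ : Type*} [Fintype ι₁] [Fintype ι₂]

theorem transpose_mul_fromBlocks_zero_mul (B : Matrix (ι₁ ⊕ ι₂) κ ℝ) (Ψ : Matrix ι₂ ι₂ ℝ) :
    Bᵀ * fromBlocks (0 : Matrix ι₁ ι₁ ℝ) 0 0 Ψ * B = (toRows₂ B)ᵀ * Ψ * toRows₂ B := by
  obtain ⟨B₁, B₂, rfl⟩ : ∃ B₁ B₂, B = fromRows B₁ B₂ := ⟨_, _, (fromRows_toRows B).symm⟩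
  simp [transpose_fromRows, Matrix.fromCols_mul_fromBlocks, Matrix.fromCols_mul_fromRows,
    Matrix.mul_assoc]

theorem upperTriangular_transpose_sandwich [Fintype κ] (N : Matrix ι₁ ι₁ ℝ) (C : Matrix ι₁ ι₂ ℝ)
    (Z Ψ : Matrix ι₂ ι₂ ℝ) (B : Matrix (ι₁ ⊕ ι₂) κ ℝ) (M : Matrix κ κ ℝ) :
    (fromBlocks N C 0 Z)ᵀ * fromBlocks 0 0 0 Ψ * fromBlocks N C 0 Z
      - (fromBlocks N C 0 Z)ᵀ * fromBlocks 0 0 0 Ψ * B * M * Bᵀ * fromBlocks 0 0 0 Ψ *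
        fromBlocks N C 0 Z
      = fromBlocks 0 0 0 (Zᵀ * Ψ * Z - Zᵀ * Ψ * toRows₂ B * M * (toRows₂ B)ᵀ * Ψ * Z) := by
  obtain ⟨B₁, B₂, rfl⟩ : ∃ B₁ B₂, B = fromRows B₁ B₂ := ⟨_, _, (fromRows_toRows B).symm⟩
  simp [fromBlocks_transpose, transpose_fromRows, fromBlocks_multiply, fromBlocks_mul_fromRows,
    Matrix.mul_assoc, sub_eq_add_neg, fromBlocks_neg, fromBlocks_add]

end Blocks

theorem stmt_18_general {p q m : ℕ}
    (A Q : Matrix (Fin p ⊕ Fin q) (Fin p ⊕ Fin q) ℝ)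
    (B S : Matrix (Fin p ⊕ Fin q) (Fin m) ℝ)
    (R : Matrix (Fin m) (Fin m) ℝ)
    (hPi : (fromBlocks Q S Sᵀ R).PosSemidef)
    (Xo : Matrix (Fin p ⊕ Fin q) (Fin p ⊕ Fin q) ℝ) (hXo : IsCGDARESolution A Q B S R Xo)
    (N₀ : Matrix (Fin p) (Fin p) ℝ) (C : Matrix (Fin p) (Fin q) ℝ)
    (Z : Matrix (Fin q) (Fin q) ℝ)
    (hAXo : AX A B S R Xo = fromBlocks N₀ C 0 Z)
    (X1 : Matrix (Fin p ⊕ Fin q) (Fin p ⊕ Fin q) ℝ) (hX1 : X1ᵀ = X1)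
    (hk1 : KerCond A B S R X1)
    (Ψ : Matrix (Fin q) (Fin q) ℝ)
    (hΔ : X1 - Xo = fromBlocks 0 0 0 Ψ) :
    Ricc A Q B S R X1 - Xo =
      fromBlocks 0 0 0
        (Zᵀ * Ψ * Z -
          Zᵀ * Ψ * (B.submatrix Sum.inr (id : Fin m → Fin m)) *
            mpinv (RX R B Xo +
              (B.submatrix Sum.inr (id : Fin m → Fin m))ᵀ * Ψ *
                (B.submatrix Sum.inr (id : Fin m → Fin m))) *
            (B.submatrix Sum.inr (id : Fin m → Fin m))ᵀ * Ψ * Z) := by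
  have hR : Rᵀ = R := by
    simpa only [IsHermitian, conjTranspose_eq_transpose_of_trivial] using
      (isHermitian_fromBlocks_iff.1 hPi.isHermitian).2.2.2
  have hRX1 : RX R B X1 = RX R B Xo + (toRows₂ B)ᵀ * Ψ * toRows₂ B := by
    rw [RX_eq_RX_add (Y := Xo), hΔ, transpose_mul_fromBlocks_zero_mul]
  rw [Ricc_sub_eq_of_isCGDARESolution hR hXo hX1 hk1, hΔ, hAXo, hRX1]
  exact upperTriangular_transpose_sandwich N₀ C Z Ψ B _

/-- reduction of the generalised Riccati difference equation. Here
`ℝ^n = ℝ^p × ℝ^q` (`q = n - p`), `A_{X∘} = [[N₀, C], [0, Z]]`, `B = [B₁; B₂]` and the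
difference from the reference solution `X∘` evolves according to the reduced-order
homogeneous generalised Riccati difference equation. -/
theorem stmt_18 {p q m : ℕ} (hp : 0 < p) (hq : 0 < q) (hm : 0 < m)
    (A Q : Matrix (Fin p ⊕ Fin q) (Fin p ⊕ Fin q) ℝ)
    (B S : Matrix (Fin p ⊕ Fin q) (Fin m) ℝ)
    (R : Matrix (Fin m) (Fin m) ℝ)
    (hPi : (fromBlocks Q S Sᵀ R).PosSemidef)
    (Xo : Matrix (Fin p ⊕ Fin q) (Fin p ⊕ Fin q) ℝ) (hXo : IsCGDARESolution A Q B S R Xo)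
    (N₀ : Matrix (Fin p) (Fin p) ℝ) (C : Matrix (Fin p) (Fin q) ℝ)
    (Z : Matrix (Fin q) (Fin q) ℝ)
    (hAXo : AX A B S R Xo = fromBlocks N₀ C 0 Z)
    (X1 : Matrix (Fin p ⊕ Fin q) (Fin p ⊕ Fin q) ℝ) (hX1 : X1ᵀ = X1)
    (hk1 : KerCond A B S R X1)
    (Ψ : Matrix (Fin q) (Fin q) ℝ) (hΨ : Ψᵀ = Ψ)
    (hΔ : X1 - Xo = fromBlocks 0 0 0 Ψ) :
    Ricc A Q B S R X1 - Xo =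
      fromBlocks 0 0 0
        (Zᵀ * Ψ * Z -
          Zᵀ * Ψ * (B.submatrix Sum.inr (id : Fin m → Fin m)) *
            mpinv (RX R B Xo +
              (B.submatrix Sum.inr (id : Fin m → Fin m))ᵀ * Ψ *
                (B.submatrix Sum.inr (id : Fin m → Fin m))) *
            (B.submatrix Sum.inr (id : Fin m → Fin m))ᵀ * Ψ * Z) :=
  stmt_18_general A Q B S R hPi Xo hXo N₀ C Z hAXo X1 hX1 hk1 Ψ hΔ
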